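/- The factor i₄(k) = 9 c(k)²·(((k c(k))')² − 1) + (c(k)² − c(2k)²)·(3 + 15 c(k)² + 6 k c(k) c'(k) − k² c'(k)²), with c(k) = sqrt(tanh(k)/k), is strictly negative for all sufficiently large k. -/

import Mathlib

open Filter

noncomputable def cww (k : ℝ) : ℝ := Real.sqrt (Real.tanh k / k)

noncomputable def i4 (k : ℝ) : ℝ :=
  9 * cww k ^ 2 * ((deriv (fun k => k * cww k) k) ^ 2 - 1) +
    (cww k ^ 2 - cww (2 * k) ^ 2) *
      (3 + 15 * cww k ^ 2 + 6 * k * cww k * deriv cww k - k ^ 2 * (deriv cww k) ^ 2)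

/-! Write `c = cww` and `t = tanh k`. Then `k c² = t → 1`, and differentiating `c² = t / k` gives
`2 k² c c' = k (1 - t²) - t → -1`, because `1 - t² = cosh⁻² k` decays exponentially. Hence
`k c c' → 0`, `k² c'² = (k c c') (k² c c') / (k c²) → 0` and `((k c)')² = c² + 2 k c c' + k² c'² → 0`,
so `k · i4 k → 9 (0 - 1) + (1 - 1/2) · 3 = -15/2`. -/

open Real Topology

namespace Real

theorem one_sub_tanh_sq (x : ℝ) : 1 - tanh x ^ 2 = (cosh x ^ 2)⁻¹ := by
  rw [tanh_eq_sinh_div_cosh, div_pow, cosh_sq x]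
  field_simp
  ring

theorem hasDerivAt_tanh (x : ℝ) : HasDerivAt tanh (1 - tanh x ^ 2) x := by
  have h := (hasDerivAt_sinh x).div (hasDerivAt_cosh x) (cosh_pos x).ne'
  refine (h.congr_deriv ?_).congr_of_eventuallyEq (.of_forall tanh_eq_sinh_div_cosh)
  rw [one_sub_tanh_sq]
  field_simp
  exact cosh_sq_sub_sinh_sq x

theorem tanh_nonneg {x : ℝ} (hx : 0 ≤ x) : 0 ≤ tanh x := by
  rw [tanh_eq_sinh_div_cosh]
  exact div_nonneg (sinh_nonneg_iff.mpr hx) (cosh_pos x).le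

theorem tanh_pos {x : ℝ} (hx : 0 < x) : 0 < tanh x := by
  rw [tanh_eq_sinh_div_cosh]
  exact div_pos (sinh_pos_iff.mpr hx) (cosh_pos x)

theorem tendsto_mul_one_sub_tanh_sq_atTop :
    Tendsto (fun x => x * (1 - tanh x ^ 2)) atTop (𝓝 0) := by
  have hlim : Tendsto (fun x => 2 * (x * exp (-x))) atTop (𝓝 0) := by
    simpa using (tendsto_pow_mul_exp_neg_atTop_nhds_zero 1).const_mul 2
  refine squeeze_zero' ?_ ?_ hlim
  · filter_upwards [eventually_ge_atTop 0] with x hx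
    rw [one_sub_tanh_sq]
    positivity
  · filter_upwards [eventually_ge_atTop 0] with x hx
    -- `1 / cosh² ≤ 1 / cosh ≤ 2 / eˣ` as `1 ≤ cosh x` and `eˣ ≤ 2 cosh x`
    have hcosh : exp x ≤ 2 * cosh x := by
      rw [cosh_eq]; linarith [exp_pos (-x)]
    have hbound : (cosh x ^ 2)⁻¹ ≤ 2 * exp (-x) := by
      rw [exp_neg, inv_le_comm₀ (by positivity) (by positivity), mul_inv, inv_inv]
      nlinarith [one_le_cosh x]
    rw [one_sub_tanh_sq, mul_left_comm]
    exact mul_le_mul_of_nonneg_left hbound hx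

theorem tendsto_one_sub_tanh_sq_atTop : Tendsto (fun x => 1 - tanh x ^ 2) atTop (𝓝 0) :=
  (tendsto_mul_one_sub_tanh_sq_atTop.div_atTop tendsto_id).congr' <| by
    filter_upwards [eventually_ne_atTop 0] with x hx
    simp [hx]

theorem tendsto_tanh_atTop : Tendsto tanh atTop (𝓝 1) := by
  -- `0 ≤ 1 - tanh x ≤ (1 - tanh x) (1 + tanh x)` for `x ≥ 0`
  have h : Tendsto (fun x => 1 - tanh x) atTop (𝓝 0) := by
    refine squeeze_zero' ?_ ?_ tendsto_one_sub_tanh_sq_atTop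
    · exact Eventually.of_forall fun x => by linarith [tanh_lt_one x]
    · filter_upwards [eventually_ge_atTop 0] with x hx
      nlinarith [tanh_lt_one x, tanh_nonneg hx]
  simpa using h.const_sub 1

end Real

theorem cww_sq {k : ℝ} (hk : 0 ≤ k) : cww k ^ 2 = tanh k / k :=
  sq_sqrt (div_nonneg (tanh_nonneg hk) hk)

theorem mul_cww_sq {k : ℝ} (hk : 0 < k) : k * cww k ^ 2 = tanh k := by
  rw [cww_sq hk.le, mul_div_cancel₀ _ hk.ne']

theorem differentiableAt_cww {k : ℝ} (hk : 0 < k) : DifferentiableAt ℝ cww k :=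
  (((hasDerivAt_tanh k).differentiableAt.div differentiableAt_id hk.ne').sqrt
    (div_pos (tanh_pos hk) hk).ne')

theorem hasDerivAt_cww_sq {k : ℝ} (hk : 0 < k) :
    HasDerivAt (fun x => cww x ^ 2) ((k * (1 - tanh k ^ 2) - tanh k) / k ^ 2) k := by
  have h := (hasDerivAt_tanh k).div (hasDerivAt_id k) hk.ne'
  refine (h.congr_deriv (by simp [mul_comm])).congr_of_eventuallyEq ?_
  filter_upwards [lt_mem_nhds hk] with x hx
  exact cww_sq hx.le

theorem mul_mul_cww_mul_deriv_cww {k : ℝ} (hk : 0 < k) :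
    k * (k * cww k * deriv cww k) = (k * (1 - tanh k ^ 2) - tanh k) / 2 := by
  have h := ((differentiableAt_cww hk).hasDerivAt.pow 2).unique (hasDerivAt_cww_sq hk)
  norm_num at h
  field_simp at h ⊢
  linear_combination h

theorem tendsto_mul_cww_sq_atTop : Tendsto (fun k => k * cww k ^ 2) atTop (𝓝 1) :=
  tendsto_tanh_atTop.congr' <| by
    filter_upwards [eventually_gt_atTop 0] with k hk using (mul_cww_sq hk).symm

theorem tendsto_cww_sq_atTop : Tendsto (fun k => cww k ^ 2) atTop (𝓝 0) :=
  (tendsto_tanh_atTop.div_atTop tendsto_id).congr' <| by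
    filter_upwards [eventually_ge_atTop 0] with k hk using (cww_sq hk).symm

theorem tendsto_mul_mul_cww_mul_deriv_cww_atTop :
    Tendsto (fun k => k * (k * cww k * deriv cww k)) atTop (𝓝 (-1 / 2)) := by
  have h := (tendsto_mul_one_sub_tanh_sq_atTop.sub tendsto_tanh_atTop).div_const 2
  rw [zero_sub] at h
  exact h.congr' <| by
    filter_upwards [eventually_gt_atTop 0] with k hk using (mul_mul_cww_mul_deriv_cww hk).symm

theorem tendsto_mul_cww_mul_deriv_cww_atTop :
    Tendsto (fun k => k * cww k * deriv cww k) atTop (𝓝 0) :=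
  (tendsto_mul_mul_cww_mul_deriv_cww_atTop.div_atTop tendsto_id).congr' <| by
    filter_upwards [eventually_ne_atTop 0] with k hk
    simp [hk]

theorem tendsto_sq_mul_deriv_cww_sq_atTop :
    Tendsto (fun k => k ^ 2 * deriv cww k ^ 2) atTop (𝓝 0) := by
  have h := (tendsto_mul_cww_mul_deriv_cww_atTop.mul
    tendsto_mul_mul_cww_mul_deriv_cww_atTop).div tendsto_mul_cww_sq_atTop one_ne_zero
  rw [zero_mul, zero_div] at h
  refine h.congr' ?_
  filter_upwards [eventually_gt_atTop 0] with k hk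
  have hc : cww k ≠ 0 := (sqrt_pos.mpr (div_pos (tanh_pos hk) hk)).ne'
  simp only [Pi.div_apply]
  field_simp

theorem tendsto_deriv_mul_cww_sq_atTop :
    Tendsto (fun k => deriv (fun x => x * cww x) k ^ 2) atTop (𝓝 0) := by
  have h := (tendsto_cww_sq_atTop.add (tendsto_mul_cww_mul_deriv_cww_atTop.const_mul 2)).add
    tendsto_sq_mul_deriv_cww_sq_atTop
  rw [mul_zero, add_zero, add_zero] at h
  refine h.congr' ?_
  filter_upwards [eventually_gt_atTop 0] with k hk
  rw [deriv_fun_mul differentiableAt_fun_id (differentiableAt_cww hk), deriv_id'']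
  ring

theorem tendsto_mul_i4_atTop : Tendsto (fun k => k * i4 k) atTop (𝓝 (-15 / 2)) := by
  have h2k : Tendsto (fun k => 2 * k * cww (2 * k) ^ 2) atTop (𝓝 1) :=
    tendsto_mul_cww_sq_atTop.comp (tendsto_id.const_mul_atTop two_pos)
  -- `k · i4 k = 9 (k c²) (((k c)')² - 1) + (k c² - (2k) c(2k)² / 2) (3 + 15 c² + 6 k c c' - k² c'²)`
  have h := ((tendsto_mul_cww_sq_atTop.const_mul 9).mul
    (tendsto_deriv_mul_cww_sq_atTop.sub_const 1)).add
    ((tendsto_mul_cww_sq_atTop.sub (h2k.div_const 2)).mul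
      ((((tendsto_cww_sq_atTop.const_mul 15).const_add 3).add
        (tendsto_mul_cww_mul_deriv_cww_atTop.const_mul 6)).sub tendsto_sq_mul_deriv_cww_sq_atTop))
  convert h using 2 with k
  · unfold i4; ring
  · norm_num

theorem i4_neg_at_infty : ∀ᶠ k in atTop, i4 k < 0 := by
  filter_upwards [tendsto_mul_i4_atTop.eventually (gt_mem_nhds (by norm_num : (-15 / 2 : ℝ) < 0)),
    eventually_gt_atTop 0] with k hneg hk
  exact neg_of_mul_neg_right hneg hk.le
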